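/- Let f(z) = ∑_{n=0}^∞ a_n z^n be a power series with complex coefficients convergent on the open disk D(0,R) ⊂ ℂ with R > 0, and let f_a(z) := ∑_{n=0}^∞ |a_n| z^n. Let A, B be commuting bounded linear operators on a complex Hilbert space H with ‖A‖² < R and ‖B‖² < R. Then r(f(AB)) ≤ (1/2) f_a(‖AB‖) + (1/2) min{ f_a(‖A‖ ‖B²‖^{1/2}), f_a(‖A²‖^{1/2} ‖B‖) }. -/

import Mathlib

/-!
If `φ` is a character of a commutative complex Banach algebra, then `|φ y| ≤ r(y)` and
`φ (∑ aₙ yⁿ) = ∑ aₙ (φ y)ⁿ`; since the spectrum consists of such values, `r(f(y)) ≤ f_a(r(y))`.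
In a noncommutative Banach algebra one passes to the closed subalgebra generated by `x`, which is
commutative and, by Gelfand's formula, computes the same spectral radii. For `x = AB` one has
`r(AB)² ≤ ‖(AB)²‖ = ‖A²B²‖ ≤ ‖A‖²‖B²‖`, symmetrically `r(AB) ≤ ‖A²‖^{1/2}‖B‖`, and `r(AB) ≤ ‖AB‖`;
as `f_a` is increasing, `r(f(AB))` is bounded by `f_a` at each of these three points, hence by the
stated average.
-/

open scoped ENNReal

namespace spectrum

variable {A : Type*} [NormedRing A] [NormedAlgebra ℂ A] [CompleteSpace A]

theorem spectralRadius_ne_top (x : A) : spectralRadius ℂ x ≠ ∞ :=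
  ne_top_of_le_ne_top (by simp [ENNReal.mul_eq_top])
    (spectralRadius_le_pow_nnnorm_pow_one_div ℂ x 0)

theorem norm_le_toReal_spectralRadius {x : A} {k : ℂ} (hk : k ∈ spectrum ℂ x) :
    ‖k‖ ≤ (spectralRadius ℂ x).toReal :=
  ENNReal.toReal_le_toReal ENNReal.coe_ne_top (spectralRadius_ne_top x) |>.mpr
    (le_iSup₂ (f := fun z (_ : z ∈ spectrum ℂ x) => (‖z‖₊ : ℝ≥0∞)) k hk)

/-- The spectrum may grow in a subalgebra, but Gelfand's formula only involves norms. -/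
theorem spectralRadius_subalgebra_coe {S : Subalgebra ℂ A} [CompleteSpace S] (x : S) :
    spectralRadius ℂ (x : A) = spectralRadius ℂ x :=
  tendsto_nhds_unique (pow_nnnorm_pow_one_div_tendsto_nhds_spectralRadius (x : A))
    (pow_nnnorm_pow_one_div_tendsto_nhds_spectralRadius x)

theorem spectralRadius_tsum_smul_pow_le_of_commRing {C : Type*} [NormedCommRing C]
    [NormedAlgebra ℂ C] [CompleteSpace C] {a : ℕ → ℂ} {y : C}
    (hy : Summable fun n => a n • y ^ n)
    (hr : Summable fun n => ‖a n‖ * (spectralRadius ℂ y).toReal ^ n) :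
    spectralRadius ℂ (∑' n, a n • y ^ n) ≤
      ENNReal.ofReal (∑' n, ‖a n‖ * (spectralRadius ℂ y).toReal ^ n) := by
  refine iSup₂_le fun z hz => ?_
  obtain ⟨φ, rfl⟩ := WeakDual.CharacterSpace.mem_spectrum_iff_exists.mp hz
  have hφy := norm_le_toReal_spectralRadius (WeakDual.CharacterSpace.apply_mem_spectrum φ y)
  rw [← norm_toNNReal]
  refine ENNReal.ofReal_le_ofReal ?_
  rw [← (hy.hasSum.map φ (map_continuous φ)).tsum_eq]
  refine tsum_of_norm_bounded hr.hasSum fun n => ?_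
  rw [Function.comp_apply, map_smul, map_pow, norm_smul, norm_pow]
  gcongr

theorem spectralRadius_tsum_smul_pow_le {a : ℕ → ℂ} {x : A}
    (hx : Summable fun n => ‖a n • x ^ n‖)
    (hr : Summable fun n => ‖a n‖ * (spectralRadius ℂ x).toReal ^ n) :
    spectralRadius ℂ (∑' n, a n • x ^ n) ≤
      ENNReal.ofReal (∑' n, ‖a n‖ * (spectralRadius ℂ x).toReal ^ n) := by
  let S := Algebra.elemental ℂ x
  let _ : NormedCommRing S := { (inferInstance : NormedRing S) with mul_comm := mul_comm }
  let y : S := ⟨x, Algebra.elemental.self_mem ℂ x⟩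
  have hy : Summable fun n => a n • y ^ n := Summable.of_norm hx
  have hcoe : ((∑' n, a n • y ^ n : S) : A) = ∑' n, a n • x ^ n :=
    (hy.hasSum.map S.val continuous_subtype_val).tsum_eq.symm
  have hry : spectralRadius ℂ y = spectralRadius ℂ x := (spectralRadius_subalgebra_coe y).symm
  rw [← hcoe, spectralRadius_subalgebra_coe, ← hry]
  exact spectralRadius_tsum_smul_pow_le_of_commRing hy (hry ▸ hr)

theorem toReal_spectralRadius_le_norm [NormOneClass A] (x : A) :
    (spectralRadius ℂ x).toReal ≤ ‖x‖ :=
  ENNReal.toReal_le_coe_of_le_coe (spectralRadius_le_nnnorm x)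

theorem toReal_spectralRadius_le_sqrt_norm_sq [NormOneClass A] (x : A) :
    (spectralRadius ℂ x).toReal ≤ √‖x ^ 2‖ := by
  rw [Real.le_sqrt ENNReal.toReal_nonneg (norm_nonneg _), ← ENNReal.toReal_pow]
  exact ENNReal.toReal_le_coe_of_le_coe
    ((spectralRadius_pow_le x 2 two_ne_zero).trans (spectralRadius_le_nnnorm _))

theorem toReal_spectralRadius_mul_le_norm_mul_sqrt_norm_sq [NormOneClass A] {x y : A}
    (hxy : Commute x y) :
    (spectralRadius ℂ (x * y)).toReal ≤ ‖x‖ * √‖y ^ 2‖ :=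
  calc (spectralRadius ℂ (x * y)).toReal
      ≤ √‖(x * y) ^ 2‖ := toReal_spectralRadius_le_sqrt_norm_sq _
    _ ≤ √(‖x‖ ^ 2 * ‖y ^ 2‖) := by
      rw [hxy.mul_pow]
      gcongr
      exact (norm_mul_le _ _).trans (by gcongr; exact norm_pow_le x 2)
    _ = ‖x‖ * √‖y ^ 2‖ := by rw [Real.sqrt_mul (by positivity), Real.sqrt_sq (norm_nonneg x)]

end spectrum

theorem sqrt_norm_sq_le_norm {A : Type*} [SeminormedRing A] (x : A) : √‖x ^ 2‖ ≤ ‖x‖ :=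
  Real.sqrt_le_iff.mpr ⟨norm_nonneg x, norm_pow_le' x two_pos⟩

theorem summable_norm_mul_pow_of_lt {a : ℕ → ℂ} {R t : ℝ}
    (hconv : ∀ z : ℂ, ‖z‖ < R → Summable fun n => a n * z ^ n) (ht : 0 ≤ t) (htR : t < R) :
    Summable fun n => ‖a n‖ * t ^ n := by
  obtain ⟨w, htw, hwR⟩ := exists_between htR
  have hw : ‖(w : ℂ)‖ < R := by rwa [Complex.norm_real, Real.norm_of_nonneg (ht.trans htw.le)]
  have := summable_powerSeries_of_norm_lt (hconv w hw).hasSum.tendsto_sum_nat.cauchySeq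
    (z := (t : ℂ)) (by simpa [abs_of_nonneg ht, abs_of_nonneg (ht.trans htw.le)] using htw)
  simpa [abs_of_nonneg ht] using this.norm

section PowerSeries

variable {A : Type*} [NormedRing A] [NormedAlgebra ℂ A] [CompleteSpace A] [NormOneClass A]
  {a : ℕ → ℂ} {R : ℝ}

theorem toReal_spectralRadius_tsum_smul_pow_le
    (hconv : ∀ z : ℂ, ‖z‖ < R → Summable fun n => a n * z ^ n) {x : A} (hx : ‖x‖ < R) {s : ℝ}
    (hs : (spectralRadius ℂ x).toReal ≤ s) (hsR : s < R) :
    (spectralRadius ℂ (∑' n, a n • x ^ n)).toReal ≤ ∑' n, ‖a n‖ * s ^ n := by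
  have hρ : 0 ≤ (spectralRadius ℂ x).toReal := ENNReal.toReal_nonneg
  have hsum_ρ := summable_norm_mul_pow_of_lt hconv hρ (hs.trans_lt hsR)
  have hsum_s := summable_norm_mul_pow_of_lt hconv (hρ.trans hs) hsR
  have hsum_x : Summable fun n => ‖a n • x ^ n‖ := by
    refine (summable_norm_mul_pow_of_lt hconv (norm_nonneg x) hx).of_nonneg_of_le
      (fun n => norm_nonneg _) fun n => ?_
    rw [norm_smul]
    gcongr
    exact norm_pow_le x n
  refine ENNReal.toReal_le_of_le_ofReal (tsum_nonneg fun n => by have := hρ.trans hs; positivity)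
    ((spectrum.spectralRadius_tsum_smul_pow_le hsum_x hsum_ρ).trans (ENNReal.ofReal_le_ofReal ?_))
  exact hsum_ρ.tsum_le_tsum (fun n => by gcongr) hsum_s

theorem toReal_spectralRadius_tsum_smul_mul_pow_le
    (hconv : ∀ z : ℂ, ‖z‖ < R → Summable fun n => a n * z ^ n) {x y : A} (hxy : Commute x y)
    (hx : ‖x‖ ^ 2 < R) (hy : ‖y‖ ^ 2 < R) :
    (spectralRadius ℂ (∑' n : ℕ, a n • (x * y) ^ n)).toReal ≤
      (1 / 2) * (∑' n : ℕ, ‖a n‖ * ‖x * y‖ ^ n) +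
        (1 / 2) * min
          (∑' n : ℕ, ‖a n‖ * (‖x‖ * √‖y ^ 2‖) ^ n)
          (∑' n : ℕ, ‖a n‖ * (√‖x ^ 2‖ * ‖y‖) ^ n) := by
  have hxyR : ‖x‖ * ‖y‖ < R := by nlinarith [norm_nonneg x, norm_nonneg y]
  have key {s : ℝ} (hs : (spectralRadius ℂ (x * y)).toReal ≤ s) (hs' : s ≤ ‖x‖ * ‖y‖) :=
    toReal_spectralRadius_tsum_smul_pow_le (a := a) hconv ((norm_mul_le x y).trans_lt hxyR) hs
      (hs'.trans_lt hxyR)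
  have h₀ := key (spectrum.toReal_spectralRadius_le_norm _) (norm_mul_le x y)
  have h₁ := key (spectrum.toReal_spectralRadius_mul_le_norm_mul_sqrt_norm_sq hxy)
    (by gcongr; exact sqrt_norm_sq_le_norm y)
  have h₂ := key (s := √‖x ^ 2‖ * ‖y‖)
    (by
      rw [hxy.eq, mul_comm]
      exact spectrum.toReal_spectralRadius_mul_le_norm_mul_sqrt_norm_sq hxy.symm)
    (by gcongr; exact sqrt_norm_sq_le_norm x)
  linarith [le_min h₁ h₂]

end PowerSeries

theorem spectralRadius_powerSeries_mul_le_min_sq_bound_general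
    {H : Type*} [NormedAddCommGroup H] [InnerProductSpace ℂ H] [CompleteSpace H]
    (a : ℕ → ℂ) (R : ℝ)
    (hconv : ∀ z : ℂ, ‖z‖ < R → Summable fun n : ℕ => a n * z ^ n)
    (A B : H →L[ℂ] H) (hcomm : A * B = B * A)
    (hA : ‖A‖ ^ 2 < R) (hB : ‖B‖ ^ 2 < R) :
    (spectralRadius ℂ (∑' n : ℕ, a n • (A * B) ^ n)).toReal ≤
      (1 / 2) * (∑' n : ℕ, ‖a n‖ * ‖A * B‖ ^ n) +
        (1 / 2) * min
          (∑' n : ℕ, ‖a n‖ * (‖A‖ * Real.sqrt ‖B ^ 2‖) ^ n)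
          (∑' n : ℕ, ‖a n‖ * (Real.sqrt ‖A ^ 2‖ * ‖B‖) ^ n) := by
  -- `‖(1 : H →L[ℂ] H)‖ = 1` only holds for nontrivial `H`.
  rcases subsingleton_or_nontrivial H with _ | _
  · rw [Subsingleton.elim (∑' n : ℕ, a n • (A * B) ^ n) 0, spectrum.spectralRadius_zero,
      ENNReal.toReal_zero]
    positivity
  · exact toReal_spectralRadius_tsum_smul_mul_pow_le hconv hcomm hA hB

/-- For commuting `A`, `B` with `‖A‖² < R`, `‖B‖² < R`, one has
`r(f(AB)) ≤ (1/2) f_a(‖AB‖) + (1/2) min { f_a(‖A‖ ‖B²‖^{1/2}), f_a(‖A²‖^{1/2} ‖B‖) }`. -/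
theorem spectralRadius_powerSeries_mul_le_min_sq_bound
    {H : Type*} [NormedAddCommGroup H] [InnerProductSpace ℂ H] [CompleteSpace H]
    (a : ℕ → ℂ) (R : ℝ) (hR : 0 < R)
    (hconv : ∀ z : ℂ, ‖z‖ < R → Summable fun n : ℕ => a n * z ^ n)
    (A B : H →L[ℂ] H) (hcomm : A * B = B * A)
    (hA : ‖A‖ ^ 2 < R) (hB : ‖B‖ ^ 2 < R) :
    (spectralRadius ℂ (∑' n : ℕ, a n • (A * B) ^ n)).toReal ≤
      (1 / 2) * (∑' n : ℕ, ‖a n‖ * ‖A * B‖ ^ n) +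
        (1 / 2) * min
          (∑' n : ℕ, ‖a n‖ * (‖A‖ * Real.sqrt ‖B ^ 2‖) ^ n)
          (∑' n : ℕ, ‖a n‖ * (Real.sqrt ‖A ^ 2‖ * ‖B‖) ^ n) :=
  spectralRadius_powerSeries_mul_le_min_sq_bound_general a R hconv A B hcomm hA hB
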